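/- Let f : ℝⁿ → ℝ be convex differentiable, g : ℝⁿ → ℝ∪{+∞} proper closed convex, F = f + g. Let ε ≥ 0, B ≥ 0, ρ ≥ 0 and suppose x̃ satisfies 0 ∈ ∇f(x) − (B+ρ)(x − x̃) + ∂_ε g(x̃) together with the line-search condition D_f(x̃, x) ≤ (B/2)‖x − x̃‖², where D_f(u,v) = f(u) − f(v) − ⟨∇f(v), u − v⟩. Then for all z ∈ ℝⁿ: −ε ≤ F(z) − F(x̃) + ((B+ρ)/2)‖x − z‖² − ((B+ρ)/2)‖z − x̃‖² − (ρ/2)‖x̃ − x‖². (Inexact over-regularized proximal gradient inequality.) -/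

import Mathlib

open scoped RealInnerProductSpace

/-- The ε-subdifferential of `g` at `xb`. -/
def epsSubdiff {n : ℕ} (g : EuclideanSpace ℝ (Fin n) → EReal) (ε : ℝ)
    (xb : EuclideanSpace ℝ (Fin n)) : Set (EuclideanSpace ℝ (Fin n)) :=
  {v | ∀ x, ((⟪v, x - xb⟫ : ℝ) : EReal) + g xb ≤ g x + (ε : EReal)}

/-- Gradient inequality for a convex differentiable function. -/
lemma convex_grad_ineq {n : ℕ} {f : EuclideanSpace ℝ (Fin n) → ℝ}
    (hf : ConvexOn ℝ Set.univ f) {x gx : EuclideanSpace ℝ (Fin n)}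
    (hg : HasGradientAt f gx x) (z : EuclideanSpace ℝ (Fin n)) :
    f x + ⟪gx, z - x⟫ ≤ f z := by
  set φ : ℝ → ℝ := fun t => f (t • (z - x) + x) with hφ
  have hconv : ConvexOn ℝ Set.univ φ := by
    have := hf.comp_affineMap (AffineMap.lineMap x z)
    have heq : (f ∘ (AffineMap.lineMap x z)) = φ := by
      funext t
      simp [φ, AffineMap.lineMap_apply, vsub_eq_sub, vadd_eq_add]
    rw [heq] at this
    simpa using this
  have hderiv : HasDerivAt φ ⟪gx, z - x⟫ 0 := by
    have hcurve : HasDerivAt (fun t : ℝ => t • (z - x) + x) (z - x) 0 := by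
      simpa using ((hasDerivAt_id (0:ℝ)).smul_const (z - x)).add_const x
    have hfd : HasFDerivAt f ((InnerProductSpace.toDual ℝ _) gx) ((0:ℝ) • (z - x) + x) := by
      simpa using hg.hasFDerivAt
    have := hfd.comp_hasDerivAt (0:ℝ) hcurve
    simp [InnerProductSpace.toDual_apply_apply] at this; exact this
  have hs := hconv.le_slope_of_hasDerivAt (Set.mem_univ 0) (Set.mem_univ 1)
    one_pos hderiv
  have hφ0 : φ 0 = f x := by simp [φ]
  have hφ1 : φ 1 = f z := by simp [φ]
  rw [slope_def_field, hφ0, hφ1] at hs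
  rw [show (1:ℝ) - 0 = 1 by norm_num, div_one] at hs
  linarith

/-- **Inexact over-regularized proximal gradient inequality.**
If `0 ∈ ∇f(x) − (B+ρ)(x − x̃) + ∂_ε g(x̃)` and
`D_f(x̃, x) ≤ (B/2)‖x − x̃‖²`, then for all `z`,
`−ε ≤ F(z) − F(x̃) + ((B+ρ)/2)‖x − z‖² − ((B+ρ)/2)‖z − x̃‖² − (ρ/2)‖x̃ − x‖²`,
written additively as
`F(x̃) + ((B+ρ)/2)‖z − x̃‖² + (ρ/2)‖x̃ − x‖² ≤ F(z) + ((B+ρ)/2)‖x − z‖² + ε`. -/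
theorem stmt4 {n : ℕ} (f : EuclideanSpace ℝ (Fin n) → ℝ)
    (hf : ConvexOn ℝ Set.univ f)
    (f' : EuclideanSpace ℝ (Fin n) → EuclideanSpace ℝ (Fin n))
    (hf' : ∀ x, HasGradientAt f (f' x) x)
    (g : EuclideanSpace ℝ (Fin n) → EReal)
    (hlsc : LowerSemicontinuous g)
    (hconv : Convex ℝ {p : EuclideanSpace ℝ (Fin n) × ℝ | g p.1 ≤ (p.2 : EReal)})
    (hproper_top : ∃ x, g x ≠ ⊤) (hproper_bot : ∀ x, g x ≠ ⊥)
    (F : EuclideanSpace ℝ (Fin n) → EReal)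
    (hF : F = fun z => (f z : EReal) + g z)
    (ε B ρ : ℝ) (hε : 0 ≤ ε) (hB : 0 ≤ B) (hρ : 0 ≤ ρ)
    (x xt : EuclideanSpace ℝ (Fin n))
    (hincl : ∃ v ∈ epsSubdiff g ε xt, f' x - (B + ρ) • (x - xt) + v = 0)
    (hls : f xt - f x - ⟪f' x, xt - x⟫ ≤ B / 2 * ‖x - xt‖ ^ 2) :
    ∀ z, F xt + (((B + ρ) / 2 * ‖z - xt‖ ^ 2 + ρ / 2 * ‖xt - x‖ ^ 2 : ℝ) : EReal)
      ≤ F z + (((B + ρ) / 2 * ‖x - z‖ ^ 2 + ε : ℝ) : EReal) := by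
  obtain ⟨v, hv, hveq⟩ := hincl
  have hvdef : v = (B + ρ) • (x - xt) - f' x := by
    have := hveq
    abel_nf at this ⊢
    linear_combination (norm := module) this
  -- g xt is finite
  have hgxt_ne_top : g xt ≠ ⊤ := by
    intro htop
    obtain ⟨x₀, hx₀⟩ := hproper_top
    have := hv x₀
    rw [htop] at this
    rw [EReal.add_top_of_ne_bot (EReal.coe_ne_bot _)] at this
    have hr : g x₀ = (((g x₀).toReal : ℝ) : EReal) :=
      (EReal.coe_toReal hx₀ (hproper_bot x₀)).symm
    rw [hr, ← EReal.coe_add] at this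
    exact EReal.coe_ne_top _ (top_le_iff.mp this)
  set c : ℝ := (g xt).toReal with hc
  have hgxt : g xt = (c : EReal) := (EReal.coe_toReal hgxt_ne_top (hproper_bot xt)).symm
  intro z
  rcases eq_or_ne (g z) ⊤ with hz | hz
  · rw [hF]
    simp only
    rw [hz, EReal.add_top_of_ne_bot (EReal.coe_ne_bot _),
      EReal.top_add_of_ne_bot (EReal.coe_ne_bot _)]
    exact le_top
  · set d : ℝ := (g z).toReal with hd
    have hgz : g z = (d : EReal) := (EReal.coe_toReal hz (hproper_bot z)).symm
    -- subdifferential inequality, real form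
    have h3 : ⟪v, z - xt⟫ + c ≤ d + ε := by
      have := hv z
      rw [hgxt, hgz, ← EReal.coe_add, ← EReal.coe_add] at this
      exact_mod_cast this
    have h1 := convex_grad_ineq hf (hf' x) z
    -- expand inner products
    have hv1 : ⟪v, z - xt⟫ = (B + ρ) * ⟪x - xt, z - xt⟫ - ⟪f' x, z - xt⟫ := by
      rw [hvdef, inner_sub_left, real_inner_smul_left]
    have hsplit : ⟪x - xt, z - xt⟫ = -⟪x - xt, xt - z⟫ := by
      rw [← inner_neg_right]; congr 1; abel
    have hsplit2 : ⟪f' x, z - xt⟫ = ⟪f' x, z - x⟫ + ⟪f' x, x - xt⟫ := by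
      rw [← inner_add_right]; congr 1; abel
    have hsplit3 : ⟪f' x, x - xt⟫ = -⟪f' x, xt - x⟫ := by
      rw [← inner_neg_right]; congr 1; abel
    have hnorm : ‖x - z‖ ^ 2 = ‖x - xt‖ ^ 2 + 2 * ⟪x - xt, xt - z⟫ + ‖xt - z‖ ^ 2 := by
      have : x - z = (x - xt) + (xt - z) := by abel
      rw [this, ← real_inner_self_eq_norm_sq, inner_add_add_self,
        real_inner_self_eq_norm_sq, real_inner_self_eq_norm_sq,
        real_inner_comm (xt - z) (x - xt)]
      ring
    have hn1 : ‖xt - x‖ = ‖x - xt‖ := norm_sub_rev _ _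
    have hn2 : ‖z - xt‖ = ‖xt - z‖ := norm_sub_rev _ _
    rw [hF]
    simp only
    rw [hgxt, hgz, ← EReal.coe_add, ← EReal.coe_add, ← EReal.coe_add, ← EReal.coe_add,
      EReal.coe_le_coe_iff]
    rw [hv1, hsplit, hsplit2, hsplit3] at h3
    rw [hn1, hn2]
    nlinarith [h3, h1, hls, hnorm]
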